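/- arXiv:2310.09372 — 2 statements merged into one kernel-verified Lean document; each statement's English description precedes it below -/
import Mathlib

section
/- Let (K,v) be a local field of characteristic 0 and residue characteristic p. Let g(z) = z^d + c_{d−1}z^{d−1} + ⋯ + c₀ ∈ 𝒪_K[z] be monic of degree d with v(cᵢ) > 0 for all i < d (monomial good reduction). Let β₀ ∈ an algebraic closure with 0 < v(β₀) and v(β₀) ≠ v(c₀). Then setting F_n = K(g⁻ⁿ(β₀)), the p-adic valuation v_p(e(F_n/K)) of the ramification index tends to infinity as n → ∞, provided p | d. -/
/-!
Let `δ = min_{i<d} v(cᵢ) > 0`. For `β` with `0 < v β ≠ v c₀`, the product of the roots of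
`g(z) - β` is `±(c₀ - β)`, of valuation `min (v c₀) (v β)`; so some preimage of `β` has
valuation in `(0, v β / d]`, and again different from `v c₀`. Iterating gives a backward orbit
`βₙ` whose valuations tend to `0`. Once `v βₙ < δ`, the term `z^d` dominates in `g(z) = βₙ`,
so every preimage has valuation exactly `v βₙ / d`, and `v β_{N+k} = r / d^k` with `r > 0`.
As `β_{N+k} ∈ F_{N+k}`, the number `e(F_{N+k}/K) · r / d^k` lies in the value group `ℤ` of `K`.
Hence `r` is rational and `p^k ∣ e(F_{N+k}/K) · A` for a fixed integer `A ≠ 0`, so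
`v_p(e(F_{N+k}/K)) ≥ k - v_p(A)`.
-/

/-- The value group of a subset `S` of a valued field: the additive subgroup of `ℝ`
generated by the valuations of the nonzero elements of `S`. -/
noncomputable def valGroup {Ω : Type*} [Field Ω] (v : AddValuation Ω (WithTop ℝ))
    (S : Set Ω) : AddSubgroup ℝ :=
  AddSubgroup.closure {r : ℝ | ∃ x ∈ S, x ≠ 0 ∧ v x = (r : WithTop ℝ)}

open Polynomial

theorem Nat.Prime.pow_dvd_of_pow_add_factorization_dvd_mul {p a b m : ℕ} (hp : p.Prime)
    (hb : b ≠ 0) (h : p ^ (m + b.factorization p) ∣ a * b) : p ^ m ∣ a := by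
  rcases eq_or_ne a 0 with rfl | ha
  · exact dvd_zero _
  rw [hp.pow_dvd_iff_le_factorization (mul_ne_zero ha hb), Nat.factorization_mul ha hb,
    Finsupp.add_apply] at h
  exact (hp.pow_dvd_iff_le_factorization ha).mpr (by omega)

theorem exists_forall_ge_pow_dvd_of_mul_eq_int_mul_pow {p d : ℕ} (hp : p.Prime) (hpd : p ∣ d)
    {r : ℝ} (hr : r ≠ 0) {e : ℕ → ℕ} (h : ∀ k, ∃ z : ℤ, (e k : ℝ) * r = z * d ^ k) (m : ℕ) :
    ∃ K, ∀ k ≥ K, p ^ m ∣ e k := by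
  by_cases he : ∀ k, e k = 0
  · exact ⟨0, fun k _ => he k ▸ dvd_zero _⟩
  obtain ⟨k₁, hk₁⟩ := not_forall.mp he
  obtain ⟨z₁, hz₁⟩ := h k₁
  -- `A = e k₁ * r` is a fixed nonzero integer, and `d ^ k ∣ e k * A` for every `k`.
  set A : ℤ := z₁ * d ^ k₁
  have hA : A ≠ 0 := by
    have : (A : ℝ) ≠ 0 := by
      rw [Int.cast_mul, Int.cast_pow, Int.cast_natCast, ← hz₁]
      exact mul_ne_zero (by exact_mod_cast hk₁) hr
    exact_mod_cast this
  refine ⟨m + A.natAbs.factorization p, fun k hk => ?_⟩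
  obtain ⟨z, hz⟩ := h k
  have hdvd : (d : ℤ) ^ k ∣ e k * A := ⟨z * e k₁, by
    have : ((e k * A : ℤ) : ℝ) = ((d ^ k * (z * e k₁) : ℤ) : ℝ) := by
      push_cast [A]
      rw [← hz₁]
      linear_combination (e k₁ : ℝ) * hz
    exact_mod_cast this⟩
  have hpk : p ^ k ∣ e k * A.natAbs := by
    have := Int.natAbs_dvd_natAbs.mpr hdvd
    rw [Int.natAbs_pow, Int.natAbs_natCast, Int.natAbs_mul, Int.natAbs_natCast] at this
    exact (pow_dvd_pow_of_dvd hpd k).trans this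
  exact hp.pow_dvd_of_pow_add_factorization_dvd_mul (Int.natAbs_ne_zero.mpr hA)
    ((pow_dvd_pow p hk).trans hpk)

theorem exists_seq_of_forall_exists {α : Type*} {P : α → Prop} {R : α → α → Prop}
    (h : ∀ x, P x → ∃ y, P y ∧ R x y) {x₀ : α} (h₀ : P x₀) :
    ∃ s : ℕ → α, s 0 = x₀ ∧ ∀ n, P (s n) ∧ R (s n) (s (n + 1)) := by
  choose f hfP hfR using h
  let step : {x // P x} → {x // P x} := fun x => ⟨f x x.2, hfP x x.2⟩
  refine ⟨fun n => (step^[n] ⟨x₀, h₀⟩).1, rfl, fun n => ⟨(step^[n] _).2, ?_⟩⟩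
  simp only [Function.iterate_succ_apply', step]
  exact hfR _ _

theorem Function.iterate_apply_eq_zero_of_apply_succ {α : Type*} {f : α → α} {s : ℕ → α}
    (h : ∀ n, f (s (n + 1)) = s n) (n : ℕ) : f^[n] (s n) = s 0 := by
  induction n with
  | zero => rfl
  | succ n ih => rw [Function.iterate_succ_apply, h, ih]

theorem WithTop.eq_coe_div_of_nsmul_eq_coe {a : WithTop ℝ} {d : ℕ} {s : ℝ} (ha : 0 ≤ a)
    (hd : d ≠ 0) (h : d • a = s) : a = ((s / d : ℝ) : WithTop ℝ) := by
  obtain ⟨b, rfl⟩ := WithTop.ne_top_iff_exists.mp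
    (ne_top_of_le_ne_top (h ▸ WithTop.coe_ne_top) (le_self_nsmul ha hd))
  rw [← WithTop.coe_nsmul, WithTop.coe_eq_coe, nsmul_eq_mul] at h
  rw [WithTop.coe_eq_coe, ← h]
  field_simp

theorem exists_lt_of_nsmul_succ_le {a : ℕ → WithTop ℝ} {d : ℕ} (hd : 1 < d)
    (ha : ∀ n, d • a (n + 1) ≤ a n) (ha0 : a 0 ≠ ⊤) {ε : WithTop ℝ} (hε : 0 < ε) :
    ∃ n, a n < ε := by
  obtain ⟨t, ht0, htε⟩ := exists_between hε
  obtain ⟨t, rfl⟩ := WithTop.ne_top_iff_exists.mp (htε.trans_le le_top).ne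
  obtain ⟨r, hr⟩ := WithTop.ne_top_iff_exists.mp ha0
  have hpow : ∀ n, d ^ n • a n ≤ a 0 := fun n => by
    induction n with
    | zero => simp
    | succ n ih =>
      calc d ^ (n + 1) • a (n + 1) = d ^ n • d • a (n + 1) := by
            rw [pow_succ, mul_nsmul, smul_comm]
        _ ≤ d ^ n • a n := nsmul_le_nsmul_right (ha n) _
        _ ≤ a 0 := ih
  have ht0' : (0 : ℝ) < t := by exact_mod_cast ht0
  obtain ⟨n, hn⟩ := pow_unbounded_of_one_lt (r / t) (by exact_mod_cast hd : (1 : ℝ) < d)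
  refine ⟨n, lt_of_not_ge fun hle => ?_⟩
  have : ((d ^ n * t : ℝ) : WithTop ℝ) ≤ r := by
    rw [hr, ← Nat.cast_pow, ← nsmul_eq_mul, WithTop.coe_nsmul]
    exact (nsmul_le_nsmul_right (htε.le.trans hle) _).trans (hpow n)
  rw [div_lt_iff₀ ht0'] at hn
  exact (this.trans_lt (by exact_mod_cast hn : ((r : ℝ) : WithTop ℝ) < _)).false

namespace AddValuation

variable {R Γ₀ : Type*} [CommRing R] [LinearOrderedAddCommMonoidWithTop Γ₀]

theorem map_multiset_prod (v : AddValuation R Γ₀) (s : Multiset R) :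
    v s.prod = (s.map v).sum := by
  induction s using Multiset.induction_on with
  | empty => simp
  | cons a s ih => simp [ih]

end AddValuation

section NewtonPolygon

variable {Ω : Type*} [Field Ω] (v : AddValuation Ω (WithTop ℝ)) {q : Polynomial Ω}

theorem Polynomial.Monic.eval_eq_pow_add_sum (hq : q.Monic) (y : Ω) :
    q.eval y = y ^ q.natDegree + ∑ i ∈ Finset.range q.natDegree, q.coeff i * y ^ i := by
  conv_lhs => rw [hq.as_sum]
  simp [eval_finsetSum]

theorem val_pos_of_val_eval_pos (hq : q.Monic) (hc : ∀ i < q.natDegree, 0 < v (q.coeff i))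
    {y : Ω} (hy : 0 < v (q.eval y)) : 0 < v y := by
  by_contra! hy0
  obtain ⟨r, hr⟩ := WithTop.ne_top_iff_exists.mp (hy0.trans_lt (WithTop.coe_lt_top (0 : ℝ))).ne
  have hr0 : r ≤ 0 := by exact_mod_cast hr ▸ hy0
  have hval_pow : ∀ i : ℕ, v (y ^ i) = ((i * r : ℝ) : WithTop ℝ) := fun i => by
    rw [v.map_pow, ← hr, ← WithTop.coe_nsmul, nsmul_eq_mul]
  have hlower : v (y ^ q.natDegree) <
      v (∑ i ∈ Finset.range q.natDegree, q.coeff i * y ^ i) := by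
    refine v.map_lt_sum (by rw [hval_pow]; exact WithTop.coe_ne_top) fun i hi => ?_
    have hi : i < q.natDegree := Finset.mem_range.mp hi
    rw [v.map_mul, hval_pow, hval_pow]
    calc (((q.natDegree : ℝ) * r : ℝ) : WithTop ℝ) ≤ ((i * r : ℝ) : WithTop ℝ) := by
          exact_mod_cast mul_le_mul_of_nonpos_right (by exact_mod_cast hi.le) hr0
      _ = 0 + ((i * r : ℝ) : WithTop ℝ) := (zero_add _).symm
      _ < v (q.coeff i) + ((i * r : ℝ) : WithTop ℝ) :=
          WithTop.add_lt_add_right WithTop.coe_ne_top (hc i hi)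
  rw [hq.eval_eq_pow_add_sum, v.map_add_eq_of_lt_left hlower, hval_pow] at hy
  have : (0 : ℝ) < q.natDegree * r := by exact_mod_cast hy
  nlinarith [q.natDegree.cast_nonneg (α := ℝ)]

theorem nsmul_val_eq_val_eval_of_lt (hq : q.Monic) {δ : WithTop ℝ}
    (hδ : ∀ i < q.natDegree, δ ≤ v (q.coeff i)) {y : Ω} (hy : 0 ≤ v y)
    (hyδ : v (q.eval y) < δ) : q.natDegree • v y = v (q.eval y) := by
  have hlower : δ ≤ v (∑ i ∈ Finset.range q.natDegree, q.coeff i * y ^ i) :=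
    v.map_le_sum fun i hi => by
      rw [v.map_mul, v.map_pow]
      simpa using add_le_add (hδ i (Finset.mem_range.mp hi)) (nsmul_nonneg hy i)
  rw [← v.map_pow, ← v.map_sub_eq_of_lt_left (hyδ.trans_le hlower), hq.eval_eq_pow_add_sum,
    add_sub_cancel_right]

theorem exists_eval_eq_val_lt_coeff_zero [IsAlgClosed Ω] (hq : q.Monic) (hd : 2 ≤ q.natDegree)
    (hc : ∀ i < q.natDegree, 0 < v (q.coeff i)) {x : Ω} (hx : 0 < v x)
    (hxc : v x ≠ v (q.coeff 0)) :
    ∃ y, q.eval y = x ∧ 0 < v y ∧ v y < v (q.coeff 0) ∧ q.natDegree • v y ≤ v x := by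
  set P := q - C x
  have hPm : P.Monic := hq.sub_of_left (degree_C_le.trans_lt (by
    rw [← natDegree_pos_iff_degree_pos]; omega))
  have hPdeg : P.natDegree = q.natDegree := natDegree_sub_C
  have hsplit : P.Splits := IsAlgClosed.splits P
  have hroot : ∀ y ∈ P.roots, q.eval y = x := fun y hy => by
    simpa [P, sub_eq_zero] using isRoot_of_mem_roots hy
  have hcard : P.roots.card = q.natDegree :=
    (splits_iff_card_roots.mp hsplit).trans hPdeg
  obtain ⟨y, hyP, hymin⟩ := Multiset.exists_min_image v
    (Multiset.card_pos.mp (by omega) : P.roots ≠ 0)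
  have hprod : q.natDegree • v y ≤ min (v (q.coeff 0)) (v x) := by
    have hP0 : v (P.coeff 0) = min (v (q.coeff 0)) (v x) := by
      rw [coeff_sub, coeff_C_zero, sub_eq_add_neg,
        v.map_add_of_distinct_val (by rwa [v.map_neg, ne_comm]), v.map_neg]
    rw [← hP0, hsplit.coeff_zero_eq_prod_roots_of_monic hPm, v.map_mul, v.map_pow, v.map_neg,
      v.map_one, nsmul_zero, zero_add, v.map_multiset_prod, ← hcard, ← Multiset.card_map v]
    exact Multiset.card_nsmul_le_sum fun a ha => by
      obtain ⟨z, hz, rfl⟩ := Multiset.mem_map.mp ha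
      exact hymin z hz
  have hy0 : 0 < v y := val_pos_of_val_eval_pos v hq hc (hroot y hyP ▸ hx)
  refine ⟨y, hroot y hyP, hy0, ?_, hprod.trans (min_le_right _ _)⟩
  have hμ : min (v (q.coeff 0)) (v x) ≠ ⊤ := by
    intro h
    exact hxc ((min_eq_top.mp h).2.trans (min_eq_top.mp h).1.symm)
  have hy_top : v y ≠ ⊤ :=
    ne_top_of_le_ne_top hμ ((le_self_nsmul hy0.le (by omega)).trans hprod)
  calc v y = v y + 0 := (add_zero _).symm
    _ < v y + v y := WithTop.add_lt_add_left hy_top hy0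
    _ = 2 • v y := (two_nsmul _).symm
    _ ≤ q.natDegree • v y := nsmul_le_nsmul_left hy0.le hd
    _ ≤ v (q.coeff 0) := hprod.trans (min_le_left _ _)

theorem exists_preimage_seq_val_eq_div_pow [IsAlgClosed Ω] (hq : q.Monic) (hd : 2 ≤ q.natDegree)
    (hc : ∀ i < q.natDegree, 0 < v (q.coeff i)) {x : Ω} (hx : 0 < v x)
    (hxc : v x ≠ v (q.coeff 0)) :
    ∃ (s : ℕ → Ω) (N : ℕ) (r : ℝ), s 0 = x ∧ (∀ n, q.eval (s (n + 1)) = s n) ∧ 0 < r ∧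
      ∀ k, v (s (N + k)) = ((r / q.natDegree ^ k : ℝ) : WithTop ℝ) := by
  obtain ⟨s, hs0, hs⟩ := exists_seq_of_forall_exists
    (P := fun x => 0 < v x ∧ v x ≠ v (q.coeff 0))
    (R := fun x y => q.eval y = x ∧ v y < v (q.coeff 0) ∧ q.natDegree • v y ≤ v x)
    (fun x ⟨hx, hxc⟩ => by
      obtain ⟨y, hyx, hy0, hyc, hyx'⟩ := exists_eval_eq_val_lt_coeff_zero v hq hd hc hx hxc
      exact ⟨y, ⟨hy0, hyc.ne⟩, hyx, hyc, hyx'⟩)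
    ⟨hx, hxc⟩
  set δ := (Finset.range q.natDegree).inf fun i => v (q.coeff i)
  have hδ0 : 0 < δ := (Finset.lt_inf_iff (WithTop.coe_lt_top 0)).mpr fun i hi =>
    hc i (Finset.mem_range.mp hi)
  obtain ⟨N, hN⟩ := exists_lt_of_nsmul_succ_le (a := fun n => v (s (n + 1))) hd
    (fun n => (hs (n + 1)).2.2.2) (hs 0).2.2.1.ne_top hδ0
  obtain ⟨r, hr⟩ := WithTop.ne_top_iff_exists.mp (hs N).2.2.1.ne_top
  have hr0 : (0 : ℝ) < r := by exact_mod_cast hr ▸ (hs (N + 1)).1.1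
  refine ⟨s, N + 1, r, hs0, fun n => (hs n).2.1, hr0, fun k => ?_⟩
  induction k with
  | zero => simp [hr]
  | succ k ih =>
    have hδk : v (s (N + 1 + k)) < δ := by
      refine lt_of_le_of_lt ?_ hN
      rw [ih, ← hr]
      have hd1 : (1 : ℝ) ≤ q.natDegree := by exact_mod_cast (by omega : 1 ≤ q.natDegree)
      exact WithTop.coe_le_coe.mpr (div_le_self hr0.le (one_le_pow₀ hd1))
    have hdiv := nsmul_val_eq_val_eval_of_lt v hq (δ := δ)
      (fun i hi => Finset.inf_le (Finset.mem_range.mpr hi)) (hs (N + 1 + k + 1)).1.1.le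
      (by rwa [(hs _).2.1])
    rw [(hs _).2.1, ih] at hdiv
    rw [← add_assoc, WithTop.eq_coe_div_of_nsmul_eq_coe (hs _).1.1.le (by omega) hdiv, pow_succ,
      div_div]

end NewtonPolygon

section ValueGroup

variable {Ω : Type*} [Field Ω] (v : AddValuation Ω (WithTop ℝ))

theorem mem_valGroup {S : Set Ω} {x : Ω} (hx : x ∈ S) {r : ℝ} (hr : v x = r) :
    r ∈ valGroup v S :=
  AddSubgroup.subset_closure ⟨x, hx, (v.ne_top_iff.mp (hr ▸ WithTop.coe_ne_top)), hr⟩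

theorem exists_int_eq_relIndex_valGroup_mul {S T : Set Ω}
    (hS : valGroup v S = AddSubgroup.zmultiples 1) {r : ℝ} (hr : r ∈ valGroup v T) :
    ∃ z : ℤ, ((valGroup v S).relIndex (valGroup v T) : ℝ) * r = z := by
  rw [hS]
  obtain ⟨z, hz⟩ :=
    AddSubgroup.mem_zmultiples_iff.mp ((AddSubgroup.zmultiples 1).nsmul_relIndex_mem hr)
  exact ⟨z, by rw [← nsmul_eq_mul, ← hz, zsmul_one]⟩

end ValueGroup

theorem stmt_14_general {K : Type*} [Field K]
    (v : AddValuation (AlgebraicClosure K) (WithTop ℝ))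
    (hdisc : valGroup v (Set.range (algebraMap K (AlgebraicClosure K))) =
      AddSubgroup.zmultiples (1 : ℝ))
    (p : ℕ) (hp : p.Prime)
    (g : Polynomial K) (hg : g.Monic) (d : ℕ) (hdeg : g.natDegree = d)
    (hpd : p ∣ d) (hd2 : 2 ≤ d)
    (hgr : ∀ i : ℕ, i < d → 0 < v (algebraMap K (AlgebraicClosure K) (g.coeff i)))
    (β₀ : AlgebraicClosure K) (hβ₀ : 0 < v β₀)
    (hβ₀c : v β₀ ≠ v (algebraMap K (AlgebraicClosure K) (g.coeff 0)))
    (F : ℕ → IntermediateField K (AlgebraicClosure K))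
    (hF : ∀ n : ℕ, F n = IntermediateField.adjoin K
      {x : AlgebraicClosure K | (fun t => Polynomial.aeval t g)^[n] x = β₀})
    (e : ℕ → ℕ)
    (he : ∀ n : ℕ, e n =
      (valGroup v (Set.range (algebraMap K (AlgebraicClosure K)))).relIndex
        (valGroup v ((F n : Set (AlgebraicClosure K))))) :
    ∀ m : ℕ, ∃ N : ℕ, ∀ n ≥ N, p ^ m ∣ e n := by
  intro m
  set Q := g.map (algebraMap K (AlgebraicClosure K))
  have hQdeg : Q.natDegree = d := by rw [hg.natDegree_map, hdeg]
  obtain ⟨s, N, r, hs0, hs, hr, hsv⟩ := exists_preimage_seq_val_eq_div_pow v (hg.map _)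
    (hQdeg ▸ hd2) (fun i hi => by rw [coeff_map]; exact hgr i (hQdeg ▸ hi)) hβ₀
    (by rwa [coeff_map])
  have hmem : ∀ n, s n ∈ (F n : Set (AlgebraicClosure K)) := fun n => by
    rw [hF n]
    refine IntermediateField.subset_adjoin K _ ?_
    rw [← hs0]
    exact Function.iterate_apply_eq_zero_of_apply_succ
      (fun n => (eval_map_algebraMap g (s (n + 1))).symm.trans (hs n)) n
  have hint : ∀ k, ∃ z : ℤ, (e (N + k) : ℝ) * r = z * d ^ k := fun k => by
    obtain ⟨z, hz⟩ :=
      exists_int_eq_relIndex_valGroup_mul v hdisc (mem_valGroup v (hmem (N + k)) (hsv k))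
    refine ⟨z, ?_⟩
    rw [he, ← hz, hQdeg]
    field_simp
  obtain ⟨K₀, hK₀⟩ := exists_forall_ge_pow_dvd_of_mul_eq_int_mul_pow hp hpd hr.ne' hint m
  refine ⟨N + K₀, fun n hn => ?_⟩
  obtain ⟨k, rfl⟩ := Nat.exists_eq_add_of_le (le_of_add_le_left hn)
  exact hK₀ k (by omega)

/-- Let `(K,v)` be a local field of characteristic `0` and residue
characteristic `p`: `K` has characteristic `0`, the valuation `v` (fixed on an algebraic
closure `Ω` of `K`) is discrete and normalized on `K` (value group `ℤ`), and `v(p) > 0`.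
Let `g(z) = z^d + c_{d-1}z^{d-1} + ⋯ + c₀` be monic of degree `d` with `v(cᵢ) > 0` for all
`i < d` (monomial good reduction), with `p ∣ d`. Let `β₀ ∈ Ω` with `0 < v(β₀)` and
`v(β₀) ≠ v(c₀)`. Then, with `F_n = K(g⁻ⁿ(β₀))` and `e(F_n/K)` the ramification index
(the index of the value group of `K` in that of `F_n`), the `p`-adic valuation
`v_p(e(F_n/K))` tends to infinity: for every `m` we have `p^m ∣ e(F_n/K)` for all
sufficiently large `n`. -/
theorem stmt_14 {K : Type*} [Field K] [CharZero K]
    (v : AddValuation (AlgebraicClosure K) (WithTop ℝ))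
    (hdisc : valGroup v (Set.range (algebraMap K (AlgebraicClosure K))) =
      AddSubgroup.zmultiples (1 : ℝ))
    (p : ℕ) (hp : p.Prime) (hvp : 0 < v ((p : AlgebraicClosure K)))
    (g : Polynomial K) (hg : g.Monic) (d : ℕ) (hdeg : g.natDegree = d)
    (hpd : p ∣ d) (hd2 : 2 ≤ d)
    (hgr : ∀ i : ℕ, i < d → 0 < v (algebraMap K (AlgebraicClosure K) (g.coeff i)))
    (β₀ : AlgebraicClosure K) (hβ₀ : 0 < v β₀)
    (hβ₀c : v β₀ ≠ v (algebraMap K (AlgebraicClosure K) (g.coeff 0)))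
    (F : ℕ → IntermediateField K (AlgebraicClosure K))
    (hF : ∀ n : ℕ, F n = IntermediateField.adjoin K
      {x : AlgebraicClosure K | (fun t => Polynomial.aeval t g)^[n] x = β₀})
    (e : ℕ → ℕ)
    (he : ∀ n : ℕ, e n =
      (valGroup v (Set.range (algebraMap K (AlgebraicClosure K)))).relIndex
        (valGroup v ((F n : Set (AlgebraicClosure K))))) :
    ∀ m : ℕ, ∃ N : ℕ, ∀ n ≥ N, p ^ m ∣ e n :=
  stmt_14_general v hdisc p hp g hg d hdeg hpd hd2 hgr β₀ hβ₀ hβ₀c F hF e he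
end

section
/- With the hypotheses of the preceding ramification bound (f monic, integral, degree d, p | d, postcritically bounded, fixes 0; a integral, avoiding the postcritical set, with fⁿ(z) − a having dⁿ distinct roots for all n), for every 0 < λ < 1 and all sufficiently large n there exist distinct α_n, β_n ∈ f⁻ⁿ(a) with λ < |α_n − β_n|_v < 1. -/
open Polynomial Filter

theorem Multiset.exists_pos_of_sum_map_pos {ι M : Type*} [AddCommMonoid M] [LinearOrder M]
    [IsOrderedAddMonoid M] {m : Multiset ι} {f : ι → M} (h : 0 < (m.map f).sum) :
    ∃ i ∈ m, 0 < f i := by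
  by_contra! hm
  simpa using h.trans_le (Multiset.sum_map_le_sum_map f (fun _ => 0) hm)

namespace AddValuation

variable {R : Type*} [CommRing R] {Γ₀ : Type*} [LinearOrderedAddCommMonoidWithTop Γ₀]
  (v : AddValuation R Γ₀)

theorem map_natCast_nonneg (n : ℕ) : 0 ≤ v n := by
  induction n with
  | zero => simp
  | succ k ih => exact_mod_cast v.map_le_add ih v.map_one.ge

theorem map_intCast_nonneg (n : ℤ) : 0 ≤ v n := by
  cases n with
  | ofNat k => simpa using v.map_natCast_nonneg k
  | negSucc k => rw [Int.cast_negSucc, v.map_neg]; exact v.map_natCast_nonneg (k + 1)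

theorem map_natCast_eq_zero_of_not_dvd {p : ℕ} (hp : p.Prime) (hvp : 0 < v p) {n : ℕ}
    (hn : ¬ p ∣ n) : v n = 0 := by
  refine le_antisymm (not_lt.mp fun hvn => ?_) (v.map_natCast_nonneg n)
  obtain ⟨u, w, huw⟩ := Nat.isCoprime_iff_coprime.mpr ((hp.coprime_iff_not_dvd.mpr hn).symm)
  have h1 : ((u * n + w * p : ℤ) : R) = 1 := by rw [huw, Int.cast_one]
  push_cast at h1
  have : 0 < v ((u : R) * n + w * p) := v.map_lt_add
    (by rw [v.map_mul]; exact lt_add_of_nonneg_of_lt (v.map_intCast_nonneg u) hvn)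
    (by rw [v.map_mul]; exact lt_add_of_nonneg_of_lt (v.map_intCast_nonneg w) hvp)
  rw [h1, v.map_one] at this
  exact this.false

theorem map_multiset_prod_s19 (m : Multiset R) : v m.prod = (m.map v).sum := by
  induction m using Multiset.induction with
  | empty => simp
  | cons a s ih => simp [v.map_mul, ih]

theorem map_sub_le_map_pow_sub_pow {x y : R} (hx : 0 ≤ v x) (hy : 0 ≤ v y) (n : ℕ) :
    v (x - y) ≤ v (x ^ n - y ^ n) := by
  rw [← geom_sum₂_mul, v.map_mul]
  refine le_add_of_nonneg_left (v.map_le_sum fun j _ => ?_)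
  rw [v.map_mul, v.map_pow, v.map_pow]
  exact add_nonneg (nsmul_nonneg hx j) (nsmul_nonneg hy _)

theorem min_le_map_pow_prime_sub_pow {p : ℕ} (hp : p.Prime) {s t : R} (hs : 0 ≤ v s)
    (ht : 0 ≤ v t) : min (p • v (s - t)) (v p + v (s - t)) ≤ v (s ^ p - t ^ p) := by
  obtain ⟨e, rfl⟩ : ∃ e, s = t + e := ⟨s - t, by ring⟩
  have he : 0 ≤ v e := by simpa using v.map_le_sub hs ht
  rw [add_sub_cancel_left, add_pow, Finset.sum_range_succ]
  simp only [Nat.sub_self, pow_zero, mul_one, Nat.choose_self, Nat.cast_one, add_sub_cancel_right]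
  refine v.map_le_sum fun k hk => ?_
  rw [v.map_mul, v.map_mul, v.map_pow, v.map_pow]
  rcases Nat.eq_zero_or_pos k with rfl | hk0
  · simp
  · obtain ⟨c, hc⟩ := hp.dvd_choose_self hk0.ne' (Finset.mem_range.mp hk)
    have hchoose : v p ≤ v (p.choose k : R) := by
      rw [hc, Nat.cast_mul, v.map_mul]; exact le_add_of_nonneg_right (v.map_natCast_nonneg c)
    have hpow : v e ≤ (p - k) • v e :=
      le_self_nsmul he (by have := Finset.mem_range.mp hk; omega)
    calc min (p • v e) (v p + v e) ≤ v e + v p := (min_le_right _ _).trans_eq (add_comm _ _)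
      _ ≤ k • v t + (p - k) • v e + v (p.choose k : R) :=
        add_le_add (le_add_of_nonneg_of_le (nsmul_nonneg ht k) hpow) hchoose

theorem min_le_map_eval_sub_eval {p : ℕ} (hp : p.Prime) {F : R[X]}
    (hFint : ∀ i, 0 ≤ v (F.coeff i)) (hcoeff : ∀ i, ¬ p ∣ i → v p ≤ v (F.coeff i))
    {x y : R} (hx : 0 ≤ v x) (hy : 0 ≤ v y) :
    min (p • v (x - y)) (v p + v (x - y)) ≤ v (F.eval x - F.eval y) := by
  rw [eval_eq_sum_range, eval_eq_sum_range, ← Finset.sum_sub_distrib]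
  refine v.map_le_sum fun i _ => ?_
  rw [← mul_sub, v.map_mul]
  by_cases hpi : p ∣ i
  · obtain ⟨m, rfl⟩ := hpi
    rw [pow_mul', pow_mul']
    refine le_add_of_nonneg_of_le (hFint _) ((min_le_min ?_ ?_).trans
      (v.min_le_map_pow_prime_sub_pow hp (by rw [v.map_pow]; exact nsmul_nonneg hx m)
        (by rw [v.map_pow]; exact nsmul_nonneg hy m)))
    · exact nsmul_le_nsmul_right (v.map_sub_le_map_pow_sub_pow hx hy m) p
    · exact add_le_add le_rfl (v.map_sub_le_map_pow_sub_pow hx hy m)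
  · exact (min_le_right _ _).trans
      (add_le_add (hcoeff i hpi) (v.map_sub_le_map_pow_sub_pow hx hy i))

theorem map_coeff_X_sub_C_nonneg {γ : R} (hγ : 0 ≤ v γ) (k : ℕ) : 0 ≤ v ((X - C γ).coeff k) := by
  rcases k with _ | _ | k
  · simpa [v.map_neg] using hγ
  · simp [v.map_one]
  · simp [coeff_X, v.map_zero]

theorem map_coeff_multiset_prod_X_sub_C_nonneg {m : Multiset R} (hm : ∀ γ ∈ m, 0 ≤ v γ)
    (j : ℕ) : 0 ≤ v ((m.map (X - C ·)).prod.coeff j) := by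
  induction m using Multiset.induction generalizing j with
  | empty => rw [Multiset.map_zero, Multiset.prod_zero, coeff_one]; split_ifs <;> simp
  | cons γ s ih =>
    rw [Multiset.map_cons, Multiset.prod_cons, coeff_mul]
    refine v.map_le_sum fun k _ => ?_
    rw [v.map_mul]
    exact add_nonneg (v.map_coeff_X_sub_C_nonneg (hm γ (Multiset.mem_cons_self γ s)) _)
      (ih (fun γ' h => hm γ' (Multiset.mem_cons_of_mem h)) _)

theorem map_natCast_le_of_dvd {m n : ℕ} (h : m ∣ n) : v m ≤ v n := by
  obtain ⟨k, rfl⟩ := h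
  rw [Nat.cast_mul, v.map_mul]
  exact le_add_of_nonneg_right (v.map_natCast_nonneg k)

end AddValuation

section Integrality

variable {L : Type*} [Field L] (v : AddValuation L (WithTop ℝ)) {F : L[X]}

theorem AddValuation.ne_of_map_sub_eq_coe {x y : L} {V : ℝ} (h : v (x - y) = V) : x ≠ y := by
  rintro rfl
  rw [sub_self, v.map_zero] at h
  exact WithTop.top_ne_coe h

theorem AddValuation.exists_map_sub_eq_coe {x y : L} (h : x ≠ y) : ∃ V : ℝ, v (x - y) = V :=
  (WithTop.ne_top_iff_exists.mp (v.ne_top_iff.mpr (sub_ne_zero.mpr h))).imp fun _ => Eq.symm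

theorem AddValuation.map_eval_eq_nsmul_of_neg (hF : F.Monic) (hFint : ∀ i, 0 ≤ v (F.coeff i))
    {t : L} (ht : v t < 0) : v (F.eval t) = F.natDegree • v t := by
  obtain ⟨r, hr⟩ := WithTop.ne_top_iff_exists.mp ht.ne_top
  have hr0 : r < 0 := by rw [← hr] at ht; exact_mod_cast ht
  rw [eval_eq_sum_range, Finset.sum_range_succ, hF.coeff_natDegree, one_mul, add_comm]
  refine (v.map_add_eq_of_lt_left ?_).trans (v.map_pow t _)
  rw [v.map_pow, ← hr, ← WithTop.coe_nsmul]
  refine v.map_lt_sum WithTop.coe_ne_top fun i hi => ?_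
  rw [v.map_mul, v.map_pow, ← hr, ← WithTop.coe_nsmul]
  refine lt_add_of_nonneg_of_lt (hFint i) (WithTop.coe_lt_coe.mpr ?_)
  simp only [nsmul_eq_mul]
  exact mul_lt_mul_of_neg_right (by exact_mod_cast Finset.mem_range.mp hi) hr0

theorem AddValuation.nonneg_of_map_eval_nonneg (hF : F.Monic) (hFint : ∀ i, 0 ≤ v (F.coeff i))
    (hd : 0 < F.natDegree) {t : L} (ht : 0 ≤ v (F.eval t)) : 0 ≤ v t := by
  by_contra! hneg
  obtain ⟨r, hr⟩ := WithTop.ne_top_iff_exists.mp hneg.ne_top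
  have hr0 : r < 0 := by rw [← hr] at hneg; exact_mod_cast hneg
  rw [v.map_eval_eq_nsmul_of_neg hF hFint hneg, ← hr, ← WithTop.coe_nsmul, WithTop.coe_nonneg,
    nsmul_eq_mul] at ht
  exact (mul_neg_of_pos_of_neg (by exact_mod_cast hd) hr0).not_ge ht

theorem AddValuation.nonneg_of_map_iterate_eval_nonneg (hF : F.Monic)
    (hFint : ∀ i, 0 ≤ v (F.coeff i)) (hd : 0 < F.natDegree) {t : L} {n : ℕ}
    (ht : 0 ≤ v ((F.eval ·)^[n] t)) : 0 ≤ v t := by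
  induction n generalizing t with
  | zero => exact ht
  | succ n ih =>
    rw [Function.iterate_succ_apply] at ht
    exact v.nonneg_of_map_eval_nonneg hF hFint hd (ih ht)

theorem AddValuation.nonneg_of_bddBelow_orbit (hF : F.Monic) (hFint : ∀ i, 0 ≤ v (F.coeff i))
    (hd : 2 ≤ F.natDegree) {γ : L} {B : ℝ} (hB : ∀ n, (B : WithTop ℝ) ≤ v ((F.eval ·)^[n] γ)) :
    0 ≤ v γ := by
  by_contra! hneg
  obtain ⟨r, hr⟩ := WithTop.ne_top_iff_exists.mp hneg.ne_top
  have hr0 : r < 0 := by rw [← hr] at hneg; exact_mod_cast hneg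
  have horbit : ∀ n, v ((F.eval ·)^[n] γ) = ((F.natDegree ^ n * r : ℝ) : WithTop ℝ) := by
    intro n
    induction n with
    | zero => simp [hr]
    | succ n ih =>
      have hneg_n : v ((F.eval ·)^[n] γ) < 0 := by
        rw [ih]; exact_mod_cast mul_neg_of_pos_of_neg (by positivity) hr0
      rw [Function.iterate_succ_apply', v.map_eval_eq_nsmul_of_neg hF hFint hneg_n, ih,
        ← WithTop.coe_nsmul, nsmul_eq_mul, pow_succ]
      ring_nf
  obtain ⟨n, hn⟩ := exists_nat_gt (B / r)
  have hB' : B ≤ F.natDegree ^ n * r := by exact_mod_cast (horbit n ▸ hB n)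
  have hpow : (n : ℝ) ≤ F.natDegree ^ n := by
    exact_mod_cast (Nat.lt_pow_self (by omega)).le
  have : n * r < B := by rwa [div_lt_iff_of_neg hr0] at hn
  nlinarith

end Integrality

section Critical

variable {L : Type*} [Field L] [IsAlgClosed L] [CharZero L]
  {Γ₀ : Type*} [LinearOrderedAddCommMonoidWithTop Γ₀]
  (v : AddValuation L Γ₀) {F : L[X]}

theorem AddValuation.map_natDegree_le_map_coeff_derivative (hF : F.Monic)
    (hcrit : ∀ γ ∈ F.derivative.roots, 0 ≤ v γ) (j : ℕ) :
    v (F.natDegree : L) ≤ v (F.derivative.coeff j) := by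
  rw [(IsAlgClosed.splits F.derivative).eq_prod_roots, leadingCoeff_derivative, hF.leadingCoeff,
    one_mul, coeff_C_mul, v.map_mul]
  exact le_add_of_nonneg_right (v.map_coeff_multiset_prod_X_sub_C_nonneg hcrit j)

theorem AddValuation.map_prime_le_map_coeff_of_not_dvd {p : ℕ} (hp : p.Prime) (hvp : 0 < v p)
    (hF : F.Monic) (hpd : p ∣ F.natDegree) (hcrit : ∀ γ ∈ F.derivative.roots, 0 ≤ v γ) {i : ℕ}
    (hi : ¬ p ∣ i) : v p ≤ v (F.coeff i) := by
  obtain ⟨j, rfl⟩ : ∃ j, i = j + 1 := Nat.exists_eq_succ_of_ne_zero (by rintro rfl; simp at hi)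
  have hderiv := v.map_natDegree_le_map_coeff_derivative hF hcrit j
  rw [coeff_derivative, v.map_mul, ← Nat.cast_succ, v.map_natCast_eq_zero_of_not_dvd hp hvp hi,
    add_zero] at hderiv
  exact (v.map_natCast_le_of_dvd hpd).trans hderiv

theorem AddValuation.map_natDegree_le_map_derivative_eval (hF : F.Monic)
    (hcrit : ∀ γ ∈ F.derivative.roots, 0 ≤ v γ) {α : L} (hα : 0 ≤ v α) :
    v (F.natDegree : L) ≤ v (F.derivative.eval α) := by
  rw [eval_eq_sum_range]
  refine v.map_le_sum fun j _ => ?_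
  rw [v.map_mul, v.map_pow]
  exact le_add_of_le_of_nonneg (v.map_natDegree_le_map_coeff_derivative hF hcrit j)
    (nsmul_nonneg hα j)

end Critical

theorem Polynomial.Monic.sub_C {R : Type*} [Ring R] {F : R[X]} (hF : F.Monic) (hd : 0 < F.degree)
    (y : R) : (F - C y).Monic :=
  hF.sub_of_left (degree_C_le.trans_lt hd)

theorem Polynomial.nodup_roots_sub_C_of_ncard_eq {R : Type*} [CommRing R] [IsDomain R]
    {F : R[X]} (hdeg : 0 < F.degree) {b : R} (hsep : {x | F.eval x = b}.ncard = F.natDegree) :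
    (F - C b).roots.Nodup := by
  classical
  have hset : {x | F.eval x = b} = ↑(F - C b).roots.toFinset := by
    ext x; simp [mem_roots_sub_C hdeg]
  rw [hset, Set.ncard_coe_finset] at hsep
  exact Multiset.toFinset_card_eq_card_iff_nodup.mp
    (le_antisymm (Multiset.toFinset_card_le _) (hsep ▸ card_roots_sub_C' hdeg))

section Fibres

variable {L : Type*} [Field L] [IsAlgClosed L] {F : L[X]}

theorem Polynomial.exists_eval_eq_of_degree_pos (hd : 0 < F.degree) (y : L) :
    ∃ x, F.eval x = y := by
  obtain ⟨x, hx⟩ := IsAlgClosed.exists_root (F - C y) (by rw [degree_sub_C hd]; exact hd.ne')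
  exact ⟨x, by rwa [IsRoot, eval_sub, eval_C, sub_eq_zero] at hx⟩

theorem Polynomial.Monic.eval_sub_eq_prod_roots (hF : F.Monic) (hd : 0 < F.degree) (y z : L) :
    F.eval z - y = ((F - C y).roots.map (z - ·)).prod := by
  simpa using (IsAlgClosed.splits (F - C y)).eval_eq_prod_roots_of_monic (hF.sub_C hd y) z

variable (v : AddValuation L (WithTop ℝ)) [CharZero L]

theorem AddValuation.exists_preimages_of_map_sub_pos {p : ℕ} (hp : p.Prime) (hvp : 0 < v p)
    (hF : F.Monic) (hFint : ∀ i, 0 ≤ v (F.coeff i)) (hd : 0 < F.natDegree) (hpd : p ∣ F.natDegree)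
    (hcrit : ∀ γ ∈ F.derivative.roots, 0 ≤ v γ) {x y : L} (hx : 0 ≤ v x) (hy : 0 ≤ v y)
    (hxy : 0 < v (x - y)) :
    ∃ x' y', F.eval x' = x ∧ F.eval y' = y ∧ 0 < v (x' - y') ∧
      min (p • v (x' - y')) (v p + v (x' - y')) ≤ v (x - y) := by
  have hdeg : 0 < F.degree := natDegree_pos_iff_degree_pos.mp hd
  obtain ⟨x', hx'⟩ := exists_eval_eq_of_degree_pos hdeg x
  have hsum : v (x - y) = ((F - C y).roots.map fun r => v (x' - r)).sum := by
    rw [← hx', hF.eval_sub_eq_prod_roots hdeg, v.map_multiset_prod_s19, Multiset.map_map]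
    rfl
  obtain ⟨y', hy'root, hpos⟩ := Multiset.exists_pos_of_sum_map_pos (hsum ▸ hxy)
  have hy' : F.eval y' = y := (mem_roots_sub_C hdeg).mp hy'root
  refine ⟨x', y', hx', hy', hpos, ?_⟩
  rw [← hx', ← hy']
  exact v.min_le_map_eval_sub_eval hp hFint
    (fun i hi => v.map_prime_le_map_coeff_of_not_dvd hp hvp hF hpd hcrit hi)
    (v.nonneg_of_map_eval_nonneg hF hFint hd (hx' ▸ hx))
    (v.nonneg_of_map_eval_nonneg hF hFint hd (hy' ▸ hy))

theorem AddValuation.exists_ne_map_sub_pos_of_ncard_eq (hF : F.Monic)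
    (hFint : ∀ i, 0 ≤ v (F.coeff i)) (hd : 0 < F.natDegree) (hvd : 0 < v (F.natDegree : L))
    (hcrit : ∀ γ ∈ F.derivative.roots, 0 ≤ v γ) {b : L} (hb : 0 ≤ v b)
    (hsep : {x | F.eval x = b}.ncard = F.natDegree) :
    ∃ α β, F.eval α = b ∧ F.eval β = b ∧ α ≠ β ∧ 0 < v (α - β) := by
  classical
  have hdeg : 0 < F.degree := natDegree_pos_iff_degree_pos.mp hd
  have hnodup := nodup_roots_sub_C_of_ncard_eq hdeg hsep
  obtain ⟨α, hαb⟩ := exists_eval_eq_of_degree_pos hdeg b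
  have hα : α ∈ (F - C b).roots := (mem_roots_sub_C hdeg).mpr hαb
  have hderiv : F.derivative.eval α = (((F - C b).roots.erase α).map (α - ·)).prod := by
    rw [← (IsAlgClosed.splits _).eval_root_derivative (hF.sub_C hdeg b) hα, derivative_sub,
      derivative_C, sub_zero]
  have hpos : 0 < ((((F - C b).roots.erase α).map fun β => v (α - β))).sum := by
    calc 0 < v (F.natDegree : L) := hvd
      _ ≤ v (F.derivative.eval α) := v.map_natDegree_le_map_derivative_eval hF hcrit
          (v.nonneg_of_map_eval_nonneg hF hFint hd (hαb ▸ hb))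
      _ = _ := by rw [hderiv, v.map_multiset_prod_s19, Multiset.map_map]; rfl
  obtain ⟨β, hβ, hαβ⟩ := Multiset.exists_pos_of_sum_map_pos hpos
  refine ⟨α, β, hαb, (mem_roots_sub_C hdeg).mp (Multiset.mem_of_mem_erase hβ), ?_, hαβ⟩
  rintro rfl
  exact hnodup.notMem_erase hβ

end Fibres

theorem exists_pos_le_of_step {P : ℕ → ℝ → Prop} {q c : ℝ} (hq : 1 < q) (hc : 0 < c)
    (hstep : ∀ n V, P n V → 0 < V → ∃ V', P (n + 1) V' ∧ 0 < V' ∧ V' ≤ max (V / q) (V - c))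
    {n₀ : ℕ} {V₀ : ℝ} (h₀ : P n₀ V₀) (hV₀ : 0 < V₀) {n : ℕ} (hn : n₀ ≤ n) :
    ∃ V, P n V ∧ 0 < V ∧ V ≤ V₀ := by
  induction n, hn using Nat.le_induction with
  | base => exact ⟨V₀, h₀, hV₀, le_rfl⟩
  | succ n _ ih =>
    obtain ⟨V, hV, hV0, hVle⟩ := ih
    obtain ⟨V', hV', hV'0, hV'le⟩ := hstep n V hV hV0
    refine ⟨V', hV', hV'0, hV'le.trans (max_le ?_ (by linarith)) |>.trans hVle⟩
    exact div_le_self hV0.le hq.le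

theorem exists_pos_lt_of_step {P : ℕ → ℝ → Prop} {q c : ℝ} (hq : 1 < q) (hc : 0 < c)
    (hstep : ∀ n V, P n V → 0 < V → ∃ V', P (n + 1) V' ∧ 0 < V' ∧ V' ≤ max (V / q) (V - c))
    {n₀ : ℕ} {V₀ : ℝ} (h₀ : P n₀ V₀) (hV₀ : 0 < V₀) {ε : ℝ} (hε : 0 < ε) :
    ∃ n V, P n V ∧ 0 < V ∧ V < ε := by
  set η := min c (ε * (1 - q⁻¹))
  have hη : 0 < η := lt_min hc (mul_pos hε (sub_pos.mpr (inv_lt_one_of_one_lt₀ hq)))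
  have hdrop : ∀ V, ε ≤ V → max (V / q) (V - c) ≤ V - η := by
    intro V hV
    refine max_le ?_ (by linarith [min_le_left c (ε * (1 - q⁻¹))])
    have hdiv : V / q = V - V * (1 - q⁻¹) := by field_simp; ring
    nlinarith [min_le_right c (ε * (1 - q⁻¹)), inv_le_one_of_one_le₀ hq.le]
  have hdescent : ∀ k : ℕ, ∀ n V, P n V → 0 < V → V < ε + k * η →
      ∃ n V, P n V ∧ 0 < V ∧ V < ε := by
    intro k
    induction k with
    | zero => exact fun n V hV hV0 hVε => ⟨n, V, hV, hV0, by simpa using hVε⟩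
    | succ k ih =>
      intro n V hV hV0 hVk
      by_cases hVε : V < ε
      · exact ⟨n, V, hV, hV0, hVε⟩
      obtain ⟨V', hV', hV'0, hV'le⟩ := hstep n V hV hV0
      exact ih (n + 1) V' hV' hV'0 (by push_cast at hVk; linarith [hdrop V (not_lt.mp hVε)])
  obtain ⟨k, hk⟩ := exists_nat_gt ((V₀ - ε) / η)
  exact hdescent k n₀ V₀ h₀ hV₀ (by rw [div_lt_iff₀ hη] at hk; linarith)

theorem eventually_exists_pos_lt_of_step {P : ℕ → ℝ → Prop} {q c : ℝ} (hq : 1 < q) (hc : 0 < c)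
    (hstep : ∀ n V, P n V → 0 < V → ∃ V', P (n + 1) V' ∧ 0 < V' ∧ V' ≤ max (V / q) (V - c))
    {n₀ : ℕ} {V₀ : ℝ} (h₀ : P n₀ V₀) (hV₀ : 0 < V₀) {ε : ℝ} (hε : 0 < ε) :
    ∀ᶠ n in atTop, ∃ V, P n V ∧ 0 < V ∧ V < ε := by
  obtain ⟨n₁, V₁, h₁, hV₁, hV₁ε⟩ := exists_pos_lt_of_step hq hc hstep h₀ hV₀ hε
  filter_upwards [eventually_ge_atTop n₁] with n hn
  obtain ⟨V, hV, hV0, hVle⟩ := exists_pos_le_of_step hq hc hstep h₁ hV₁ hn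
  exact ⟨V, hV, hV0, hVle.trans_lt hV₁ε⟩

theorem le_max_div_sub_of_min_le {p : ℕ} (hp : 0 < p) {u : WithTop ℝ} {c V V' : ℝ}
    (hc : (c : WithTop ℝ) ≤ u) (h : min (p • (V' : WithTop ℝ)) (u + V') ≤ V) :
    V' ≤ max (V / p) (V - c) := by
  rcases min_le_iff.mp h with h | h
  · rw [← WithTop.coe_nsmul, WithTop.coe_le_coe, nsmul_eq_mul] at h
    exact le_max_of_le_left ((le_div_iff₀ (by exact_mod_cast hp)).mpr (by linarith))
  · have : ((c + V' : ℝ) : WithTop ℝ) ≤ V := (add_le_add hc le_rfl).trans h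
    exact le_max_of_le_right (by linarith [WithTop.coe_le_coe.mp this])

def PreimagePairVal {L : Type*} [Field L] (v : AddValuation L (WithTop ℝ)) (F : L[X]) (b : L)
    (n : ℕ) (V : ℝ) : Prop :=
  ∃ x y, (F.eval ·)^[n] x = b ∧ (F.eval ·)^[n] y = b ∧ v (x - y) = V

section PreimagePairs

variable {L : Type*} [Field L] [IsAlgClosed L] [CharZero L] {v : AddValuation L (WithTop ℝ)}
  {F : L[X]} {b : L}

theorem PreimagePairVal.succ {p : ℕ} (hp : p.Prime) (hvp : 0 < v p) (hF : F.Monic)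
    (hFint : ∀ i, 0 ≤ v (F.coeff i)) (hd : 0 < F.natDegree) (hpd : p ∣ F.natDegree)
    (hcrit : ∀ γ ∈ F.derivative.roots, 0 ≤ v γ) (hb : 0 ≤ v b) {c : ℝ}
    (hc : (c : WithTop ℝ) ≤ v p) {n : ℕ} {V : ℝ} (h : PreimagePairVal v F b n V) (hV : 0 < V) :
    ∃ V', PreimagePairVal v F b (n + 1) V' ∧ 0 < V' ∧ V' ≤ max (V / p) (V - c) := by
  obtain ⟨x, y, hx, hy, hxy⟩ := h
  have hintegral : ∀ t, (F.eval ·)^[n] t = b → 0 ≤ v t := fun t ht =>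
    v.nonneg_of_map_iterate_eval_nonneg hF hFint hd (ht ▸ hb)
  obtain ⟨x', y', hx', hy', hpos, hmin⟩ :=
    v.exists_preimages_of_map_sub_pos hp hvp hF hFint hd hpd hcrit (hintegral x hx)
      (hintegral y hy) (hxy ▸ WithTop.coe_pos.mpr hV)
  have hne : x' ≠ y' := by
    rintro rfl
    exact v.ne_of_map_sub_eq_coe hxy (hx'.symm.trans hy')
  obtain ⟨V', hV'⟩ := v.exists_map_sub_eq_coe hne
  rw [hV', hxy] at hmin
  refine ⟨V', ⟨x', y', ?_, ?_, hV'⟩, WithTop.coe_pos.mp (hV' ▸ hpos),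
    le_max_div_sub_of_min_le hp.pos hc hmin⟩
  · rw [Function.iterate_succ_apply, hx', hx]
  · rw [Function.iterate_succ_apply, hy', hy]

theorem exists_preimagePairVal_one (hF : F.Monic) (hFint : ∀ i, 0 ≤ v (F.coeff i))
    (hd : 0 < F.natDegree) (hvd : 0 < v (F.natDegree : L))
    (hcrit : ∀ γ ∈ F.derivative.roots, 0 ≤ v γ) (hb : 0 ≤ v b)
    (hsep : {x | F.eval x = b}.ncard = F.natDegree) :
    ∃ V, PreimagePairVal v F b 1 V ∧ 0 < V := by
  obtain ⟨α, β, hα, hβ, hne, hpos⟩ :=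
    v.exists_ne_map_sub_pos_of_ncard_eq hF hFint hd hvd hcrit hb hsep
  obtain ⟨V, hV⟩ := v.exists_map_sub_eq_coe hne
  exact ⟨V, ⟨α, β, hα, hβ, hV⟩, WithTop.coe_pos.mp (hV ▸ hpos)⟩

end PreimagePairs

theorem stmt_19_general {K : Type*} [Field K] [CharZero K]
    (v : AddValuation (AlgebraicClosure K) (WithTop ℝ))
    (p : ℕ) (hp : p.Prime) (hvp : 0 < v ((p : AlgebraicClosure K)))
    (f : Polynomial K) (hf : f.Monic) (d : ℕ) (hdeg : f.natDegree = d)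
    (hd2 : 2 ≤ d) (hpd : p ∣ d)
    (hint : ∀ i : ℕ, 0 ≤ v (algebraMap K (AlgebraicClosure K) (f.coeff i)))
    (hpcb : ∃ B : ℝ,
      ∀ γ ∈ ((f.map (algebraMap K (AlgebraicClosure K))).derivative).roots, ∀ n : ℕ,
        (B : WithTop ℝ) ≤ v ((fun t => Polynomial.aeval t f)^[n] γ))
    (a : K) (haint : 0 ≤ v (algebraMap K (AlgebraicClosure K) a))
    (hsep : ∀ n : ℕ, Set.ncard {x : AlgebraicClosure K |
      (fun t => Polynomial.aeval t f)^[n] x = algebraMap K (AlgebraicClosure K) a} = d ^ n) :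
    ∀ ε : ℝ, 0 < ε → ∃ N : ℕ, ∀ n ≥ N, ∃ x y : AlgebraicClosure K, x ≠ y ∧
      (fun t => Polynomial.aeval t f)^[n] x = algebraMap K (AlgebraicClosure K) a ∧
      (fun t => Polynomial.aeval t f)^[n] y = algebraMap K (AlgebraicClosure K) a ∧
      0 < v (x - y) ∧ v (x - y) < (ε : WithTop ℝ) := by
  intro ε hε
  set F := f.map (algebraMap K (AlgebraicClosure K))
  have hFeval : (fun t => aeval t f) = (F.eval ·) := funext fun t => (eval_map_algebraMap f t).symm
  rw [hFeval] at hpcb hsep ⊢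
  have hF : F.Monic := hf.map _
  have hFdeg : F.natDegree = d := by rw [hf.natDegree_map, hdeg]
  subst hFdeg
  have hFint : ∀ i, 0 ≤ v (F.coeff i) := fun i => by rw [coeff_map]; exact hint i
  obtain ⟨B, hB⟩ := hpcb
  have hcrit : ∀ γ ∈ F.derivative.roots, 0 ≤ v γ := fun γ hγ =>
    v.nonneg_of_bddBelow_orbit hF hFint hd2 (hB γ hγ)
  obtain ⟨w, hw0, hwp⟩ := exists_between hvp
  obtain ⟨c, rfl⟩ := WithTop.ne_top_iff_exists.mp hwp.ne_top
  obtain ⟨V₁, h₁, hV₁⟩ := exists_preimagePairVal_one hF hFint (by omega)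
    (hvp.trans_le (v.map_natCast_le_of_dvd hpd)) hcrit haint (by simpa using hsep 1)
  obtain ⟨N, hN⟩ := eventually_atTop.mp <| eventually_exists_pos_lt_of_step
    (by exact_mod_cast hp.one_lt) (WithTop.coe_pos.mp hw0)
    (fun _ _ h hV => h.succ hp hvp hF hFint (by omega) hpd hcrit haint hwp.le hV) h₁ hV₁ hε
  refine ⟨N, fun n hn => ?_⟩
  obtain ⟨V, ⟨x, y, hx, hy, hxy⟩, hV0, hVε⟩ := hN n hn
  exact ⟨x, y, v.ne_of_map_sub_eq_coe hxy, hx, hy, hxy ▸ WithTop.coe_pos.mpr hV0,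
    hxy ▸ WithTop.coe_lt_coe.mpr hVε⟩

/-- With the hypotheses of the ramification bound of Statement 18
(`(K,v)` a local field of characteristic `0` and residue characteristic `p`; `f` monic of
degree `d` with integral coefficients, `p ∣ d`, postcritically bounded, fixing `0`; `a`
integral, avoiding the postcritical set, with `fⁿ(z) - a` having `dⁿ` distinct roots for
all `n`): for every `0 < λ < 1` and all sufficiently large `n` there exist distinct
`αₙ, βₙ ∈ f⁻ⁿ(a)` with `λ < |αₙ - βₙ|_v < 1`. In additive terms (`λ = e^{-ε}`): for every
`ε > 0` there is `N` such that for all `n ≥ N` there are distinct `αₙ, βₙ ∈ f⁻ⁿ(a)` with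
`0 < v(αₙ - βₙ) < ε`. -/
theorem stmt_19 {K : Type*} [Field K] [CharZero K]
    (v : AddValuation (AlgebraicClosure K) (WithTop ℝ))
    (hdisc : valGroup v (Set.range (algebraMap K (AlgebraicClosure K))) =
      AddSubgroup.zmultiples (1 : ℝ))
    (p : ℕ) (hp : p.Prime) (hvp : 0 < v ((p : AlgebraicClosure K)))
    (f : Polynomial K) (hf : f.Monic) (d : ℕ) (hdeg : f.natDegree = d)
    (hd2 : 2 ≤ d) (hpd : p ∣ d) (h0 : f.coeff 0 = 0)
    (hint : ∀ i : ℕ, 0 ≤ v (algebraMap K (AlgebraicClosure K) (f.coeff i)))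
    (hpcb : ∃ B : ℝ,
      ∀ γ ∈ ((f.map (algebraMap K (AlgebraicClosure K))).derivative).roots, ∀ n : ℕ,
        (B : WithTop ℝ) ≤ v ((fun t => Polynomial.aeval t f)^[n] γ))
    (a : K) (haint : 0 ≤ v (algebraMap K (AlgebraicClosure K) a))
    (hav : ∃ R : ℝ,
      ∀ γ ∈ ((f.map (algebraMap K (AlgebraicClosure K))).derivative).roots, ∀ n : ℕ,
        v ((fun t => Polynomial.aeval t f)^[n] γ - algebraMap K (AlgebraicClosure K) a)
          ≤ (R : WithTop ℝ))
    (hsep : ∀ n : ℕ, Set.ncard {x : AlgebraicClosure K |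
      (fun t => Polynomial.aeval t f)^[n] x = algebraMap K (AlgebraicClosure K) a} = d ^ n) :
    ∀ ε : ℝ, 0 < ε → ∃ N : ℕ, ∀ n ≥ N, ∃ x y : AlgebraicClosure K, x ≠ y ∧
      (fun t => Polynomial.aeval t f)^[n] x = algebraMap K (AlgebraicClosure K) a ∧
      (fun t => Polynomial.aeval t f)^[n] y = algebraMap K (AlgebraicClosure K) a ∧
      0 < v (x - y) ∧ v (x - y) < (ε : WithTop ℝ) :=
  stmt_19_general v p hp hvp f hf d hdeg hd2 hpd hint hpcb a haint hsep
end
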